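/- arXiv:2101.06552 — 3 statements merged into one kernel-verified Lean document; each statement's English description precedes it below -/
import Mathlib

section
/- Let f : ℝⁿ → ℝ be differentiable and convex, and let x* be a minimizer of f. Fix p > 0, C > 0, and ζ ≥ 1. Suppose X : (0, ∞) → ℝⁿ is a twice differentiable curve satisfying the Bregman Euler–Lagrange equation X''(t) + ((ζp+1)/t)·X'(t) + C·p²·t^(p-2)·∇f(X(t)) = 0, with X extending continuously to t = 0 with X(0) = x₀ and X'(0) = 0 (in the sense that t·X'(t) → 0 as t → 0⁺). Then for all t > 0, f(X(t)) − f(x*) ≤ ζ·‖x₀ − x*‖² / (2C·t^p). -/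
/-!
The energy `E(t) = C tᵖ (f(X) - f(x*)) + (ζ-1)/2 ‖X - x*‖² + ½ ‖(t/p) X' + X - x*‖²` is
nonincreasing along the flow: the equation of motion makes the derivative of the vector
`(t/p) X' + X - x*` equal to `(1-ζ) X' - C p t^(p-1) ∇f(X)`, after which
`E'(t) = C p t^(p-1) (f(X) - f(x*) - ⟪∇f(X), X - x*⟫) + (1-ζ)(t/p) ‖X'‖²`, and both terms are
nonpositive, the first by convexity. Hence `C tᵖ (f(X t) - f(x*)) ≤ E(t) ≤ E(0⁺) = ζ/2 ‖x₀ - x*‖²`.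
-/

open Real Set Filter Topology RealInnerProductSpace

theorem AntitoneOn.le_of_tendsto_nhdsGT {g : ℝ → ℝ} {a L t : ℝ} (hg : AntitoneOn g (Ioi a))
    (hlim : Tendsto g (𝓝[>] a) (𝓝 L)) (ht : a < t) : g t ≤ L :=
  ge_of_tendsto hlim <| by
    filter_upwards [Ioo_mem_nhdsGT ht] with s hs
    exact hg hs.1 (hs.1.trans hs.2) hs.2.le

section

variable {E : Type*} [NormedAddCommGroup E] [InnerProductSpace ℝ E]

theorem hasDerivAt_bregman_momentum {X X' X'' : ℝ → E} {xstar v : E} {p C ζ t : ℝ}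
    (hp : p ≠ 0) (ht : 0 < t) (hX : HasDerivAt X (X' t) t) (hX' : HasDerivAt X' (X'' t) t)
    (hode : X'' t + ((ζ * p + 1) / t) • X' t + (C * p ^ 2 * t ^ (p - 2)) • v = 0) :
    HasDerivAt (fun s => (s / p) • X' s + (X s - xstar))
      ((1 - ζ) • X' t - (C * p * t ^ (p - 1)) • v) t := by
  have hraw := (((hasDerivAt_id t).div_const p).smul hX').add (hX.sub_const xstar)
  refine hraw.congr_deriv ?_
  have h1 : t / p * ((ζ * p + 1) / t) = ζ + 1 / p := by field_simp
  have h2 : t / p * (C * p ^ 2 * t ^ (p - 2)) = C * p * t ^ (p - 1) := by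
    rw [rpow_sub ht, rpow_sub ht, rpow_two, rpow_one]
    field_simp
  rw [add_assoc, add_eq_zero_iff_eq_neg] at hode
  rw [id, hode, smul_neg, smul_add, smul_smul, smul_smul, h1, h2]
  module

noncomputable def bregmanLyapunov (f : E → ℝ) (xstar : E) (p C ζ : ℝ) (X X' : ℝ → E) (t : ℝ) :
    ℝ :=
  C * t ^ p * (f (X t) - f xstar) + (ζ - 1) / 2 * ‖X t - xstar‖ ^ 2
    + ‖(t / p) • X' t + (X t - xstar)‖ ^ 2 / 2

theorem mul_rpow_mul_sub_le_bregmanLyapunov {f : E → ℝ} {X X' : ℝ → E} {xstar : E}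
    {p C ζ : ℝ} (hζ : 1 ≤ ζ) (t : ℝ) :
    C * t ^ p * (f (X t) - f xstar) ≤ bregmanLyapunov f xstar p C ζ X X' t := by
  have hdist : 0 ≤ (ζ - 1) / 2 * ‖X t - xstar‖ ^ 2 := by
    have : 0 ≤ ζ - 1 := by linarith
    positivity
  unfold bregmanLyapunov
  linarith [sq_nonneg ‖(t / p) • X' t + (X t - xstar)‖]

theorem tendsto_bregmanLyapunov_nhdsGT_zero {f : E → ℝ} {X X' : ℝ → E} {xstar x₀ : E}
    {p C ζ : ℝ} (hf : ContinuousAt f x₀) (hp : 0 < p)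
    (hX0 : Tendsto X (𝓝[>] 0) (𝓝 x₀)) (hV0 : Tendsto (fun t => t • X' t) (𝓝[>] 0) (𝓝 0)) :
    Tendsto (bregmanLyapunov f xstar p C ζ X X') (𝓝[>] 0) (𝓝 (ζ / 2 * ‖x₀ - xstar‖ ^ 2)) := by
  have hpow : Tendsto (fun t : ℝ => t ^ p) (𝓝[>] 0) (𝓝 0) := by
    simpa [zero_rpow hp.ne'] using
      (continuousAt_rpow_const 0 p (Or.inr hp.le)).tendsto.mono_left nhdsWithin_le_nhds
  have hmom : Tendsto (fun t => (t / p) • X' t) (𝓝[>] 0) (𝓝 0) := by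
    simpa [smul_smul, div_eq_inv_mul] using hV0.const_smul p⁻¹
  have hdist := hX0.sub_const xstar
  have hlim := ((((tendsto_const_nhds (x := C)).mul hpow).mul
    ((hf.tendsto.comp hX0).sub_const (f xstar))).add
    ((hdist.norm.pow 2).const_mul ((ζ - 1) / 2))).add (((hmom.add hdist).norm.pow 2).div_const 2)
  convert hlim using 2
  · rfl
  · simp only [mul_zero, zero_mul, zero_add]
    ring

variable [CompleteSpace E]

theorem ConvexOn.add_inner_le_of_hasGradientAt {f : E → ℝ} {g x : E}
    (hconv : ConvexOn ℝ univ f) (hg : HasGradientAt f g x) (y : E) :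
    f x + ⟪g, y - x⟫ ≤ f y := by
  let ℓ : ℝ →ᵃ[ℝ] E := AffineMap.lineMap x y
  have hline : ConvexOn ℝ univ (f ∘ ℓ) := hconv.comp_affineMap ℓ
  have hderiv : HasDerivAt (f ∘ ℓ) ⟪g, y - x⟫ 0 := by
    have hℓ : HasDerivAt ℓ (y - x) 0 := AffineMap.hasDerivAt_lineMap
    simpa [ℓ] using hg.hasFDerivAt.comp_hasDerivAt_of_eq 0 hℓ (by simp [ℓ])
  have := hline.le_slope_of_hasDerivAt (mem_univ 0) (mem_univ 1) one_pos hderiv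
  simp only [slope_def_field, Function.comp_apply, AffineMap.lineMap_apply_one,
    AffineMap.lineMap_apply_zero, sub_zero, div_one, ℓ] at this
  linarith

theorem hasDerivAt_bregmanLyapunov {f : E → ℝ} {X X' X'' : ℝ → E} {xstar : E} {p C ζ t : ℝ}
    (hp : p ≠ 0) (ht : 0 < t) (hf : DifferentiableAt ℝ f (X t))
    (hX : HasDerivAt X (X' t) t) (hX' : HasDerivAt X' (X'' t) t)
    (hode : X'' t + ((ζ * p + 1) / t) • X' t + (C * p ^ 2 * t ^ (p - 2)) • gradient f (X t) = 0) :
    HasDerivAt (bregmanLyapunov f xstar p C ζ X X')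
      (C * p * t ^ (p - 1) * (f (X t) - f xstar - ⟪gradient f (X t), X t - xstar⟫)
        + (1 - ζ) * (t / p) * ‖X' t‖ ^ 2) t := by
  have hfX : HasDerivAt (fun s => f (X s)) ⟪gradient f (X t), X' t⟫ t := by
    have h := hf.hasGradientAt.hasFDerivAt.comp_hasDerivAt t hX
    simp only [InnerProductSpace.toDual_apply_apply] at h
    exact h
  have hpow : HasDerivAt (fun s : ℝ => C * s ^ p) (C * (p * t ^ (p - 1))) t :=
    (hasDerivAt_rpow_const (Or.inl ht.ne')).const_mul C
  have hraw := ((hpow.mul (hfX.sub_const (f xstar))).add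
    ((hX.sub_const xstar).norm_sq.const_mul ((ζ - 1) / 2))).add
    ((hasDerivAt_bregman_momentum (xstar := xstar) hp ht hX hX' hode).norm_sq.div_const 2)
  refine hraw.congr_deriv ?_
  rw [rpow_sub_one ht.ne']
  simp only [inner_add_left, inner_sub_left, inner_sub_right, real_inner_smul_left,
    real_inner_smul_right, real_inner_self_eq_norm_sq, real_inner_comm (gradient f (X t))]
  field_simp
  ring

theorem bregmanLyapunov_antitoneOn {f : E → ℝ} {X X' X'' : ℝ → E} {xstar : E} {p C ζ : ℝ}
    (hf : Differentiable ℝ f) (hconv : ConvexOn ℝ univ f) (hp : 0 < p) (hC : 0 < C)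
    (hζ : 1 ≤ ζ) (hX : ∀ t > (0:ℝ), HasDerivAt X (X' t) t)
    (hX' : ∀ t > (0:ℝ), HasDerivAt X' (X'' t) t)
    (hode : ∀ t > (0:ℝ),
      X'' t + ((ζ * p + 1) / t) • X' t + (C * p ^ 2 * t ^ (p - 2)) • gradient f (X t) = 0) :
    AntitoneOn (bregmanLyapunov f xstar p C ζ X X') (Ioi 0) := by
  have hderiv (t : ℝ) (ht : t ∈ Ioi 0) := hasDerivAt_bregmanLyapunov (xstar := xstar) hp.ne' ht
    (hf _) (hX t ht) (hX' t ht) (hode t ht)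
  refine antitoneOn_of_hasDerivWithinAt_nonpos (convex_Ioi 0)
    (fun t ht => (hderiv t ht).continuousAt.continuousWithinAt)
    (fun t ht => (hderiv t (interior_subset ht)).hasDerivWithinAt) fun t ht => ?_
  rw [interior_Ioi] at ht
  have hgap : f (X t) - f xstar - ⟪gradient f (X t), X t - xstar⟫ ≤ 0 := by
    have := hconv.add_inner_le_of_hasGradientAt (hf (X t)).hasGradientAt xstar
    rw [← neg_sub (X t) xstar, inner_neg_right] at this
    linarith
  have hdamp : (1 - ζ) * (t / p) * ‖X' t‖ ^ 2 ≤ 0 :=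
    mul_nonpos_of_nonpos_of_nonneg
      (mul_nonpos_of_nonpos_of_nonneg (by linarith) (div_pos ht hp).le) (sq_nonneg _)
  have hcoef : 0 ≤ C * p * t ^ (p - 1) :=
    (mul_pos (mul_pos hC hp) (rpow_pos_of_pos ht _)).le
  linarith [mul_nonpos_of_nonneg_of_nonpos hcoef hgap]

end

theorem bregman_convex_convergence_rate_general {n : ℕ}
    (f : EuclideanSpace ℝ (Fin n) → ℝ) (hf : Differentiable ℝ f)
    (hconv : ConvexOn ℝ Set.univ f)
    (xstar : EuclideanSpace ℝ (Fin n))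
    (p C ζ : ℝ) (hp : 0 < p) (hC : 0 < C) (hζ : 1 ≤ ζ)
    (X X' X'' : ℝ → EuclideanSpace ℝ (Fin n)) (x₀ : EuclideanSpace ℝ (Fin n))
    (hX : ∀ t > (0:ℝ), HasDerivAt X (X' t) t)
    (hX' : ∀ t > (0:ℝ), HasDerivAt X' (X'' t) t)
    (hode : ∀ t > (0:ℝ),
      X'' t + ((ζ * p + 1) / t) • X' t + (C * p ^ 2 * t ^ (p - 2)) • gradient f (X t) = 0)
    (hX0 : Tendsto X (nhdsWithin 0 (Ioi 0)) (nhds x₀))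
    (hV0 : Tendsto (fun t => t • X' t) (nhdsWithin 0 (Ioi 0)) (nhds 0)) :
    ∀ t > (0:ℝ), f (X t) - f xstar ≤ ζ * ‖x₀ - xstar‖ ^ 2 / (2 * C * t ^ p) := by
  intro t ht
  have hmono := bregmanLyapunov_antitoneOn (xstar := xstar) hf hconv hp hC hζ hX hX' hode
  have hlim := tendsto_bregmanLyapunov_nhdsGT_zero (xstar := xstar) (C := C) (ζ := ζ)
    hf.continuous.continuousAt hp hX0 hV0
  have hbound :=
    (mul_rpow_mul_sub_le_bregmanLyapunov hζ t).trans (hmono.le_of_tendsto_nhdsGT hlim ht)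
  rw [le_div_iff₀ (mul_pos (mul_pos two_pos hC) (rpow_pos_of_pos ht p))]
  linarith

/-- Convergence rate of the convex p-Bregman flow in ℝⁿ:
along solutions of X'' + ((ζp+1)/t) X' + C p² t^(p-2) ∇f(X) = 0,
f(X(t)) - f(x*) ≤ ζ‖x₀ - x*‖²/(2C t^p). -/
theorem bregman_convex_convergence_rate {n : ℕ}
    (f : EuclideanSpace ℝ (Fin n) → ℝ) (hf : Differentiable ℝ f)
    (hconv : ConvexOn ℝ Set.univ f)
    (xstar : EuclideanSpace ℝ (Fin n)) (hmin : ∀ y, f xstar ≤ f y)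
    (p C ζ : ℝ) (hp : 0 < p) (hC : 0 < C) (hζ : 1 ≤ ζ)
    (X X' X'' : ℝ → EuclideanSpace ℝ (Fin n)) (x₀ : EuclideanSpace ℝ (Fin n))
    (hX : ∀ t > (0:ℝ), HasDerivAt X (X' t) t)
    (hX' : ∀ t > (0:ℝ), HasDerivAt X' (X'' t) t)
    (hode : ∀ t > (0:ℝ),
      X'' t + ((ζ * p + 1) / t) • X' t + (C * p ^ 2 * t ^ (p - 2)) • gradient f (X t) = 0)
    (hX0 : Tendsto X (nhdsWithin 0 (Ioi 0)) (nhds x₀))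
    (hV0 : Tendsto (fun t => t • X' t) (nhdsWithin 0 (Ioi 0)) (nhds 0)) :
    ∀ t > (0:ℝ), f (X t) - f xstar ≤ ζ * ‖x₀ - xstar‖ ^ 2 / (2 * C * t ^ p) :=
  bregman_convex_convergence_rate_general f hf hconv xstar p C ζ hp hC hζ X X' X'' x₀ hX hX' hode
    hX0 hV0
end

section
/- Let f : ℝⁿ → ℝ be differentiable, C > 0, p > 0, p̊ > 0, v ∈ ℝ. Suppose X : (0,∞) → ℝⁿ is twice differentiable and satisfies X''(t) + ((vp+1)/t)·X'(t) + C·p²·t^(p-2)·∇f(X(t)) = 0 for all t > 0. Then the reparametrized curve Y(t) = X(t^(p̊/p)) satisfies Y''(t) + ((v·p̊+1)/t)·Y'(t) + C·p̊²·t^(p̊-2)·∇f(Y(t)) = 0 for all t > 0. -/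
open Real

/-!
Under `τ(t) = t^α` the chain rule gives `Y' = α t^(α-1) X'∘τ` and
`Y'' = (α t^(α-1))² X''∘τ + α(α-1) t^(α-2) X'∘τ`. Substituting these, the left-hand side of the
`α p`-equation for `Y` at `t` is exactly `(α t^(α-1))²` times that of the `p`-equation for `X` at
`τ(t)`: the friction coefficients combine as `α(α-1) + α(v α p + 1) = α²(v p + 1)`, and
`(α p)² t^(α p - 2) = α² t^(2α-2) · p² (t^α)^(p-2)`.
-/

noncomputable def bregmanEulerLagrange {E : Type*} [AddCommGroup E] [Module ℝ E]
    (C p v t : ℝ) (x' x'' g : E) : E :=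
  x'' + ((v * p + 1) / t) • x' + (C * p ^ 2 * t ^ (p - 2)) • g

theorem bregmanEulerLagrange_rescale {E : Type*} [AddCommGroup E] [Module ℝ E]
    (C p v : ℝ) {α t : ℝ} (ht : 0 < t) (x' x'' g : E) :
    bregmanEulerLagrange C (α * p) v t ((α * t ^ (α - 1)) • x')
        ((α * t ^ (α - 1)) ^ 2 • x'' + (α * (α - 1) * t ^ (α - 2)) • x') g
      = (α * t ^ (α - 1)) ^ 2 • bregmanEulerLagrange C p v (t ^ α) x' x'' g := by
  have hsub : t ^ (α - 2) = t ^ (α - 1) / t := by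
    rw [show α - 2 = α - 1 - 1 by ring, rpow_sub ht, rpow_one]
  have hsq : t ^ (α - 1) * t ^ (α - 1) / t ^ α = t ^ (α - 1) / t := by
    rw [← rpow_add ht, ← rpow_sub ht, ← hsub]
    ring_nf
  have hpow : t ^ (α * p - 2) = t ^ (α - 1) * t ^ (α - 1) * (t ^ α) ^ (p - 2) := by
    rw [← rpow_mul ht.le, ← rpow_add ht, ← rpow_add ht]
    ring_nf
  unfold bregmanEulerLagrange
  rw [hsub, hpow]
  match_scalars
  · ring
  · linear_combination (-(α ^ 2 * (v * p + 1))) * hsq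
  · ring

section Rescaling

variable {E : Type*} [NormedAddCommGroup E] [NormedSpace ℝ E] {α t : ℝ}

theorem HasDerivAt.comp_rpow {X : ℝ → E} {x' : E} (ht : t ≠ 0)
    (hX : HasDerivAt X x' (t ^ α)) :
    HasDerivAt (fun s => X (s ^ α)) ((α * t ^ (α - 1)) • x') t :=
  hX.scomp t (hasDerivAt_rpow_const (Or.inl ht))

theorem HasDerivAt.smul_comp_rpow {X' : ℝ → E} {x'' : E} (ht : t ≠ 0)
    (hX' : HasDerivAt X' x'' (t ^ α)) :
    HasDerivAt (fun s => (α * s ^ (α - 1)) • X' (s ^ α))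
      ((α * t ^ (α - 1)) ^ 2 • x'' + (α * (α - 1) * t ^ (α - 2)) • X' (t ^ α)) t := by
  have hcoeff : HasDerivAt (fun s => α * s ^ (α - 1)) (α * ((α - 1) * t ^ (α - 2))) t := by
    simpa [show α - 1 - 1 = α - 2 by ring] using
      (hasDerivAt_rpow_const (p := α - 1) (Or.inl ht)).const_mul α
  refine (hcoeff.smul (hX'.comp_rpow ht)).congr_deriv ?_
  module

variable {X X' Y' : ℝ → E}

theorem velocity_comp_rpow_eq (hX : ∀ s > 0, HasDerivAt X (X' s) s)
    (hY : ∀ s > 0, HasDerivAt (fun u => X (u ^ α)) (Y' s) s) (ht : 0 < t) :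
    Y' t = (α * t ^ (α - 1)) • X' (t ^ α) :=
  (hY t ht).unique ((hX _ (rpow_pos_of_pos ht α)).comp_rpow ht.ne')

theorem hasDerivAt_velocity_comp_rpow {x'' : E} (hX : ∀ s > 0, HasDerivAt X (X' s) s)
    (hY : ∀ s > 0, HasDerivAt (fun u => X (u ^ α)) (Y' s) s) (ht : 0 < t)
    (hX' : HasDerivAt X' x'' (t ^ α)) :
    HasDerivAt Y'
      ((α * t ^ (α - 1)) ^ 2 • x'' + (α * (α - 1) * t ^ (α - 2)) • X' (t ^ α)) t :=
  (hX'.smul_comp_rpow ht.ne').congr_of_eventuallyEq <|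
    Filter.eventuallyEq_of_mem (Ioi_mem_nhds ht) fun _ hs => velocity_comp_rpow_eq hX hY hs

end Rescaling

theorem bregman_time_rescaling_general {n : ℕ}
    (f : EuclideanSpace ℝ (Fin n) → ℝ)
    (C p p' v : ℝ) (hp : 0 < p)
    (X X' X'' : ℝ → EuclideanSpace ℝ (Fin n))
    (hX : ∀ t > (0:ℝ), HasDerivAt X (X' t) t)
    (hX' : ∀ t > (0:ℝ), HasDerivAt X' (X'' t) t)
    (hode : ∀ t > (0:ℝ),
      X'' t + ((v * p + 1) / t) • X' t + (C * p ^ 2 * t ^ (p - 2)) • gradient f (X t) = 0)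
    (Y' Y'' : ℝ → EuclideanSpace ℝ (Fin n))
    (hY : ∀ t > (0:ℝ), HasDerivAt (fun s => X (s ^ (p' / p))) (Y' t) t)
    (hY' : ∀ t > (0:ℝ), HasDerivAt Y' (Y'' t) t) :
    ∀ t > (0:ℝ),
      Y'' t + ((v * p' + 1) / t) • Y' t
        + (C * p' ^ 2 * t ^ (p' - 2)) • gradient f (X (t ^ (p' / p))) = 0 := by
  intro t ht
  have hτ : 0 < t ^ (p' / p) := rpow_pos_of_pos ht _
  have hY''_eq := (hY' t ht).unique (hasDerivAt_velocity_comp_rpow hX hY ht (hX' _ hτ))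
  have hrescale := bregmanEulerLagrange_rescale C p v (α := p' / p) ht (X' (t ^ (p' / p)))
    (X'' (t ^ (p' / p))) (gradient f (X (t ^ (p' / p))))
  rw [div_mul_cancel₀ p' hp.ne'] at hrescale
  change bregmanEulerLagrange C p' v t (Y' t) (Y'' t) _ = 0
  rw [velocity_comp_rpow_eq hX hY ht, hY''_eq, hrescale]
  exact smul_eq_zero_of_right _ (hode _ hτ)

/-- Time-rescaling invariance of the family of p-Bregman Euler–Lagrange equations in ℝⁿ:
if X solves the p-equation, then Y(t) = X(t^(p̊/p)) solves the p̊-equation. -/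
theorem bregman_time_rescaling {n : ℕ}
    (f : EuclideanSpace ℝ (Fin n) → ℝ) (hf : Differentiable ℝ f)
    (C p p' v : ℝ) (hC : 0 < C) (hp : 0 < p) (hp' : 0 < p')
    (X X' X'' : ℝ → EuclideanSpace ℝ (Fin n))
    (hX : ∀ t > (0:ℝ), HasDerivAt X (X' t) t)
    (hX' : ∀ t > (0:ℝ), HasDerivAt X' (X'' t) t)
    (hode : ∀ t > (0:ℝ),
      X'' t + ((v * p + 1) / t) • X' t + (C * p ^ 2 * t ^ (p - 2)) • gradient f (X t) = 0)
    (Y' Y'' : ℝ → EuclideanSpace ℝ (Fin n))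
    (hY : ∀ t > (0:ℝ), HasDerivAt (fun s => X (s ^ (p' / p))) (Y' t) t)
    (hY' : ∀ t > (0:ℝ), HasDerivAt Y' (Y'' t) t) :
    ∀ t > (0:ℝ),
      Y'' t + ((v * p' + 1) / t) • Y' t
        + (C * p' ^ 2 * t ^ (p' - 2)) • gradient f (X (t ^ (p' / p))) = 0 :=
  bregman_time_rescaling_general f C p p' v hp X X' X'' hX hX' hode Y' Y'' hY hY'
end

section
/- Let f : ℝⁿ → ℝ be μ-strongly convex (μ > 0) and differentiable with minimizer x*, let ζ ≥ 1 and η = (1/√ζ + √ζ)·√μ. Suppose X : [0,∞) → ℝⁿ is twice differentiable, X(0) = x₀, X'(0) = 0, and X''(t) + η·X'(t) + ∇f(X(t)) = 0. Then the function E(t) = e^{√(μ/ζ)·t}·[f(X(t)) − f(x*) + (1/2)‖√(μ/ζ)·(X(t)−x*) + X'(t)‖² + ((ζ−1)μ/(2ζ))·‖X(t)−x*‖²] is non-increasing on [0,∞), and consequently for all t ≥ 0, f(X(t)) − f(x*) ≤ e^{−√(μ/ζ)·t}·(μ‖x₀−x*‖² + 2(f(x₀)−f(x*)))/2. -/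
open Real Set

private lemma hasDerivAt_normSq {n : ℕ} {Z : ℝ → EuclideanSpace ℝ (Fin n)}
    {Z' : EuclideanSpace ℝ (Fin n)} {t : ℝ} (h : HasDerivAt Z Z' t) :
    HasDerivAt (fun s => ‖Z s‖ ^ 2) (2 * (inner ℝ (Z t) Z' : ℝ)) t := by
  have h2 := h.inner ℝ h
  simp only [← real_inner_self_eq_norm_sq]
  rw [show (2 * inner ℝ (Z t) Z' : ℝ) = inner ℝ (Z t) Z' + inner ℝ Z' (Z t) by
    rw [real_inner_comm (Z t) Z']; ring]
  exact h2

set_option maxHeartbeats 2000000 in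
/-- Convergence rate for the strongly convex Bregman flow in ℝⁿ:
the Lyapunov function E is non-increasing and
f(X(t)) − f(x*) ≤ e^{−√(μ/ζ)t}·(μ‖x₀−x*‖² + 2(f(x₀)−f(x*)))/2. -/
theorem strongly_convex_convergence_rate {n : ℕ}
    (f : EuclideanSpace ℝ (Fin n) → ℝ) (hf : Differentiable ℝ f)
    (μ : ℝ) (hμ : 0 < μ)
    (hsc : ∀ x y, f y - f x ≥ inner ℝ (gradient f x) (y - x) + μ / 2 * ‖y - x‖ ^ 2)
    (xstar : EuclideanSpace ℝ (Fin n)) (hmin : ∀ y, f xstar ≤ f y)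
    (ζ : ℝ) (hζ : 1 ≤ ζ)
    (η : ℝ) (hη : η = (1 / Real.sqrt ζ + Real.sqrt ζ) * Real.sqrt μ)
    (X X' X'' : ℝ → EuclideanSpace ℝ (Fin n)) (x₀ : EuclideanSpace ℝ (Fin n))
    (hX0 : X 0 = x₀) (hV0 : X' 0 = 0)
    (hX : ∀ t ≥ (0:ℝ), HasDerivAt X (X' t) t)
    (hX' : ∀ t ≥ (0:ℝ), HasDerivAt X' (X'' t) t)
    (hode : ∀ t ≥ (0:ℝ), X'' t + η • X' t + gradient f (X t) = 0) :
    AntitoneOn (fun t => Real.exp (Real.sqrt (μ / ζ) * t) *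
        (f (X t) - f xstar
          + (1/2) * ‖Real.sqrt (μ / ζ) • (X t - xstar) + X' t‖ ^ 2
          + ((ζ - 1) * μ / (2 * ζ)) * ‖X t - xstar‖ ^ 2)) (Ici 0) ∧
    ∀ t ≥ (0:ℝ), f (X t) - f xstar ≤
      Real.exp (-(Real.sqrt (μ / ζ)) * t) *
        (μ * ‖x₀ - xstar‖ ^ 2 + 2 * (f x₀ - f xstar)) / 2 := by
  have hζ0 : (0:ℝ) < ζ := one_pos.trans_le hζ
  have hμ0 : (0:ℝ) ≤ μ := hμ.le
  set a := Real.sqrt (μ / ζ) with ha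
  have ha0 : 0 ≤ a := Real.sqrt_nonneg _
  have ha2 : a ^ 2 = μ / ζ := Real.sq_sqrt (by positivity)
  set b := Real.sqrt (ζ * μ) with hbdef
  have hb0 : 0 ≤ b := Real.sqrt_nonneg _
  have hab : a * b = μ := by
    rw [ha, hbdef, ← Real.sqrt_mul (by positivity),
      show μ / ζ * (ζ * μ) = μ ^ 2 by field_simp]
    exact Real.sqrt_sq hμ0
  have hba : a ≤ b := by
    apply Real.sqrt_le_sqrt
    rw [div_le_iff₀ hζ0]
    nlinarith [mul_le_mul hζ hζ zero_le_one hζ0.le, hμ, mul_pos hμ hζ0]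
  have hηab : η = a + b := by
    rw [hη, ha, hbdef, Real.sqrt_div hμ0, Real.sqrt_mul hζ0.le]
    ring
  set c := (ζ - 1) * μ / (2 * ζ) with hc
  have hc0 : 0 ≤ c := by
    apply div_nonneg (mul_nonneg (by linarith) hμ0) (by linarith)
  set E : ℝ → ℝ := fun t => Real.exp (a * t) *
      (f (X t) - f xstar + (1/2) * ‖a • (X t - xstar) + X' t‖ ^ 2
        + c * ‖X t - xstar‖ ^ 2) with hE
  -- derivative of E
  have hderiv : ∀ t ∈ Ici (0:ℝ), ∃ d : ℝ, d ≤ 0 ∧ HasDerivAt E (Real.exp (a * t) * d) t := by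
    intro t ht
    rw [mem_Ici] at ht
    set Δ := X t - xstar with hΔdef
    set V := X' t with hVdef
    set G := gradient f (X t) with hGdef
    have hΔ : HasDerivAt (fun s => X s - xstar) V t := (hX t ht).sub_const _
    have hY : HasDerivAt (fun s => a • (X s - xstar) + X' s) (a • V + X'' t) t :=
      (hΔ.const_smul a).add (hX' t ht)
    have hfX : HasDerivAt (fun s => f (X s)) (inner ℝ G V : ℝ) t := by
      have h1 := ((hf (X t)).hasGradientAt.hasFDerivAt).comp_hasDerivAt t (hX t ht)
      refine h1.congr_deriv ?_
      simp only [InnerProductSpace.toDual_apply_apply, G, V]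
    have hn1 := hasDerivAt_normSq hY
    have hn2 := hasDerivAt_normSq hΔ
    have hφ : HasDerivAt (fun s => f (X s) - f xstar
        + (1/2) * ‖a • (X s - xstar) + X' s‖ ^ 2 + c * ‖X s - xstar‖ ^ 2)
        ((inner ℝ G V : ℝ) + (1/2) * (2 * (inner ℝ (a • Δ + V) (a • V + X'' t) : ℝ))
          + c * (2 * (inner ℝ Δ V : ℝ))) t :=
      ((hfX.sub_const _).add (hn1.const_mul _)).add (hn2.const_mul _)
    have hexp : HasDerivAt (fun s => Real.exp (a * s)) (a * Real.exp (a * t)) t := by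
      simpa [mul_comm] using ((hasDerivAt_id t).const_mul a).exp
    have hEt := hexp.mul hφ
    refine ⟨a * (f (X t) - f xstar + (1/2) * ‖a • Δ + V‖ ^ 2 + c * ‖Δ‖ ^ 2)
      + ((inner ℝ G V : ℝ) + (1/2) * (2 * (inner ℝ (a • Δ + V) (a • V + X'' t) : ℝ))
          + c * (2 * (inner ℝ Δ V : ℝ))), ?_, ?_⟩
    · -- the key Lyapunov inequality
      have hXpp : a • V + X'' t = -(b • V) - G := by
        have h := hode t ht
        rw [hηab] at h
        have h2 : X'' t = -((a + b) • V + G) := by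
          rw [← add_eq_zero_iff_eq_neg, ← add_assoc]
          exact h
        rw [h2, add_smul]
        module
      have hin : (inner ℝ (a • Δ + V) (a • V + X'' t) : ℝ)
          = -(a * b * (inner ℝ Δ V : ℝ)) - a * (inner ℝ Δ G : ℝ)
            - b * ‖V‖ ^ 2 - (inner ℝ G V : ℝ) := by
        rw [hXpp]
        simp only [inner_add_left, inner_sub_right, inner_neg_right, real_inner_smul_left,
          real_inner_smul_right, real_inner_self_eq_norm_sq]
        rw [real_inner_comm V G]
        ring
      have hYn : ‖a • Δ + V‖ ^ 2 = a ^ 2 * ‖Δ‖ ^ 2 + 2 * a * (inner ℝ Δ V : ℝ) + ‖V‖ ^ 2 := by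
        rw [norm_add_sq_real, norm_smul, real_inner_smul_left, Real.norm_eq_abs,
          mul_pow, sq_abs]
        ring
      -- strong convexity at X t, xstar
      have hscc : (inner ℝ Δ G : ℝ) ≥ f (X t) - f xstar + μ / 2 * ‖Δ‖ ^ 2 := by
        have h := hsc (X t) xstar
        have e1 : (inner ℝ G (xstar - X t) : ℝ) = -(inner ℝ Δ G : ℝ) := by
          rw [real_inner_comm, show xstar - X t = -Δ by rw [hΔdef]; abel, inner_neg_left]
        have e2 : ‖xstar - X t‖ = ‖Δ‖ := by rw [hΔdef, norm_sub_rev]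
        rw [← hGdef, e1, e2] at h
        linarith
      rw [hin, hYn]
      have eq1 : (a ^ 2 - a * b + 2 * c) * (inner ℝ Δ V : ℝ) = 0 := by
        rw [ha2, hab, hc, show μ / ζ - μ + 2 * ((ζ - 1) * μ / (2 * ζ)) = 0 by
          field_simp; ring]
        ring
      have eq2 : (a * a ^ 2 / 2 + a * c - a * μ / 2) * ‖Δ‖ ^ 2 = 0 := by
        rw [show a * a ^ 2 / 2 + a * c - a * μ / 2 = 0 by
          rw [ha2, hc]; field_simp; ring]
        ring
      have h1 : 0 ≤ a * ((inner ℝ Δ G : ℝ) - (f (X t) - f xstar) - μ / 2 * ‖Δ‖ ^ 2) :=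
        mul_nonneg ha0 (by linarith)
      have h2 : 0 ≤ (b - a / 2) * ‖V‖ ^ 2 :=
        mul_nonneg (by linarith) (by positivity)
      nlinarith [h1, h2, eq1, eq2]
    · refine hEt.congr_deriv ?_
      ring
  have Hanti : AntitoneOn E (Ici 0) := by
    apply antitoneOn_of_deriv_nonpos (convex_Ici 0)
    · intro t ht
      obtain ⟨d, _, hD⟩ := hderiv t ht
      exact hD.continuousAt.continuousWithinAt
    · rw [interior_Ici]
      intro t ht
      obtain ⟨d, _, hD⟩ := hderiv t (mem_Ici.2 (le_of_lt ht))
      exact hD.differentiableAt.differentiableWithinAt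
    · rw [interior_Ici]
      intro t ht
      obtain ⟨d, hd, hD⟩ := hderiv t (mem_Ici.2 (le_of_lt ht))
      rw [hD.deriv]
      exact mul_nonpos_of_nonneg_of_nonpos (Real.exp_pos _).le hd
  refine ⟨Hanti, ?_⟩
  have hE0 : E 0 = (μ * ‖x₀ - xstar‖ ^ 2 + 2 * (f x₀ - f xstar)) / 2 := by
    rw [hE]
    simp only [mul_zero, Real.exp_zero, one_mul, hX0, hV0, add_zero, norm_smul,
      Real.norm_eq_abs, mul_pow, sq_abs, ha2, hc]
    field_simp
    ring
  intro t ht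
  have h1 : E t ≤ E 0 := Hanti self_mem_Ici (mem_Ici.2 ht) ht
  have hep := Real.exp_pos (a * t)
  have hnn : 0 ≤ (1/2) * ‖a • (X t - xstar) + X' t‖ ^ 2 + c * ‖X t - xstar‖ ^ 2 :=
    add_nonneg (by positivity) (mul_nonneg hc0 (by positivity))
  have h2 : Real.exp (a * t) * (f (X t) - f xstar) ≤ E 0 := by
    refine le_trans ?_ h1
    rw [hE]
    nlinarith [hnn, hep]
  rw [hE0] at h2
  have hexpneg : Real.exp (-a * t) = (Real.exp (a * t))⁻¹ := by
    rw [neg_mul, Real.exp_neg]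
  rw [hexpneg, inv_mul_eq_div, div_div, le_div_iff₀ (by positivity)]
  nlinarith [h2, hep]
end
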